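/- Let 0 < F < 2 and 0 < H_R < 1 with √H_R + H_R < F, let H be the smooth part of a discontinuous hydraulic shock profile on (−∞,0] with H(0) = H_*, and define f₂(x) := −H''(x)/H'(x). Let c₁ be any real number with c₁ <ف₂(0)/2, where f₂(0) is the value of f₂ at x = 0. Then for every continuously differentiable function w : (−∞,0] → ℝ, not identically zero, such that w and w' are square-integrable on (−∞,0] and (f₂²/4 + f₂'/2)w² is integrable, one has c₁ w(0)² − ∫_{−∞}^0 [w'(x)² + (f₂(x)²/4 + f₂'(x)/2) w(x)²] dx < 0. That is, the bilinear form B₂(w,w) := c₁w(0)² − ⟨w',w'⟩ − ⟨w, (f₂²/4 + f₂'/2)w⟩ is negative definite on H¹((−∞,0]). -/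

import Mathlib

open Real Filter MeasureTheory
open Set Topology

set_option maxHeartbeats 1000000

/-- `ν := 1/√H_R`. -/
noncomputable def nuOf (HR : ℝ) : ℝ := 1 / Real.sqrt HR

/-- `H₃ := ν² H_R/(ν+1)²`. -/
noncomputable def H3 (HR : ℝ) : ℝ := nuOf HR ^ 2 * HR / (nuOf HR + 1) ^ 2

/-- `H_s := (F ν²/(ν+1))^{2/3} H_R`. -/
noncomputable def Hs (F HR : ℝ) : ℝ := (F * nuOf HR ^ 2 / (nuOf HR + 1)) ^ ((2 : ℝ) / 3) * HR

/-- `H_* := (−ν−1+√(8F²ν⁴+ν²+2ν+1)) H_R/(2(ν+1))`. -/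
noncomputable def Hstar (F HR : ℝ) : ℝ :=
  (-(nuOf HR) - 1 + Real.sqrt (8 * F ^ 2 * nuOf HR ^ 4 + nuOf HR ^ 2 + 2 * nuOf HR + 1)) * HR /
    (2 * (nuOf HR + 1))

/-- Right-hand side of the profile ODE. -/
noncomputable def profileRHS (F HR h : ℝ) : ℝ :=
  F ^ 2 * (h - 1) * (h - HR) * (h - H3 HR) /
    ((h - Hs F HR) * (h ^ 2 + h * Hs F HR + Hs F HR ^ 2))

/-- `f₂ := −H''/H'`. -/
noncomputable def f2 (H : ℝ → ℝ) (x : ℝ) : ℝ := -(deriv (deriv H) x) / deriv H x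

lemma hydShock_arith (F HR : ℝ) (hF0 : 0 < F) (h0 : 0 < HR) (h1 : HR < 1)
    (hdom : Real.sqrt HR + HR < F) :
    0 < Hs F HR ∧ Hs F HR < Hstar F HR ∧ HR < Hstar F HR ∧ H3 HR < HR := by
  have hs0 : 0 < Real.sqrt HR := Real.sqrt_pos.2 h0
  have hsq : Real.sqrt HR ^ 2 = HR := Real.sq_sqrt h0.le
  have hs1 : Real.sqrt HR < 1 := by nlinarith
  obtain ⟨ν, hν⟩ : ∃ ν, nuOf HR = ν := ⟨_, rfl⟩
  have hνs : ν * Real.sqrt HR = 1 := by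
    rw [← hν, nuOf]; field_simp
  have hν0 : 0 < ν := by nlinarith
  have hν1 : 1 < ν := by nlinarith
  have hν1' : 0 < ν + 1 := by linarith
  obtain ⟨A, hA⟩ : ∃ A, F * ν ^ 2 / (ν + 1) = A := ⟨_, rfl⟩
  have hA1 : 1 < A := by
    rw [← hA, lt_div_iff₀ hν1']
    have h3 : (Real.sqrt HR + HR) * ν ^ 2 < F * ν ^ 2 :=
      mul_lt_mul_of_pos_right hdom (by positivity)
    have e1 : Real.sqrt HR * ν ^ 2 = ν := by nlinarith [hνs]
    have e2 : HR * ν ^ 2 = 1 := by nlinarith [hνs, hsq]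
    nlinarith [h3]
  have hA0 : 0 < A := zero_lt_one.trans hA1
  obtain ⟨B, hB⟩ : ∃ B, A ^ ((1:ℝ)/3) = B := ⟨_, rfl⟩
  have hB1 : 1 < B := by
    rw [← hB, Real.one_lt_rpow_iff_of_pos hA0]
    exact Or.inl ⟨hA1, by norm_num⟩
  have hB0 : 0 < B := zero_lt_one.trans hB1
  have hB3 : B ^ 3 = A := by
    rw [← hB, ← Real.rpow_natCast (A ^ ((1:ℝ)/3)) 3, ← Real.rpow_mul hA0.le]
    norm_num
  have hHs : Hs F HR = B ^ 2 * HR := by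
    rw [Hs, hν, hA, ← hB, ← Real.rpow_natCast (A ^ ((1:ℝ)/3)) 2, ← Real.rpow_mul hA0.le]
    norm_num
  have hD : 8 * F ^ 2 * ν ^ 4 + ν ^ 2 + 2 * ν + 1 = (ν + 1) ^ 2 * (8 * A ^ 2 + 1) := by
    rw [← hA]; field_simp; ring
  have hsqrtD : Real.sqrt (8 * F ^ 2 * ν ^ 4 + ν ^ 2 + 2 * ν + 1)
      = (ν + 1) * Real.sqrt (8 * A ^ 2 + 1) := by
    rw [hD, Real.sqrt_mul (sq_nonneg _), Real.sqrt_sq hν1'.le]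
  obtain ⟨R, hR⟩ : ∃ R, Real.sqrt (8 * A ^ 2 + 1) = R := ⟨_, rfl⟩
  have hstar : Hstar F HR = HR * (R - 1) / 2 := by
    rw [Hstar, hν, hsqrtD, hR]
    field_simp
    ring
  have hR3 : 3 < R := by
    rw [← hR, show (3:ℝ) = Real.sqrt 9 by
      rw [show (9:ℝ) = 3 ^ 2 by norm_num, Real.sqrt_sq]; norm_num]
    apply Real.sqrt_lt_sqrt (by norm_num)
    nlinarith
  have hRB : 2 * B ^ 2 + 1 < R := by
    rw [← hR, Real.lt_sqrt (by positivity)]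
    have hkey : 0 < B ^ 2 * ((2 * B ^ 2 + 1) * (B ^ 2 - 1)) :=
      mul_pos (by positivity) (mul_pos (by positivity) (by nlinarith))
    rw [← hB3]
    nlinarith [hkey]
  refine ⟨by rw [hHs]; positivity, ?_, ?_, ?_⟩
  · rw [hHs, hstar]; nlinarith
  · rw [hstar]; nlinarith
  · rw [H3, hν, div_lt_iff₀ (by positivity)]
    nlinarith

/-- Corollary 4.3 (negative definiteness of the half-line Robin form `B₂`): for the
smooth part of a discontinuous hydraulic shock profile, any real `c₁ < f₂(0)/2`, and
any not-identically-zero `w ∈ H¹((−∞,0])` with the displayed integrability,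
`c₁ w(0)² − ∫_{(−∞,0]} (w'² + (f₂²/4 + f₂'/2) w²) < 0`. -/
theorem form_B2_negative_definite (F HR : ℝ) (hF0 : 0 < F) (hF2 : F < 2)
    (h0 : 0 < HR) (h1 : HR < 1) (hdom : Real.sqrt HR + HR < F)
    (H : ℝ → ℝ) (hsm : ContDiff ℝ (⊤ : ℕ∞) H) (hmono : StrictAntiOn H (Set.Iic 0))
    (hode : ∀ x ≤ 0, deriv H x = profileRHS F HR (H x))
    (hlimL : Tendsto H atBot (nhds 1)) (hH0 : H 0 = Hstar F HR)
    (c1 : ℝ) (hc1 : c1 < f2 H 0 / 2)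
    (w : ℝ → ℝ) (hw : ContDiff ℝ 1 w) (hwne : ∃ x ≤ (0 : ℝ), w x ≠ 0)
    (hw2 : IntegrableOn (fun x => w x ^ 2) (Set.Iic 0))
    (hw'2 : IntegrableOn (fun x => deriv w x ^ 2) (Set.Iic 0))
    (hpot : IntegrableOn (fun x => (f2 H x ^ 2 / 4 + deriv (f2 H) x / 2) * w x ^ 2)
      (Set.Iic 0)) :
    c1 * w 0 ^ 2 -
      ∫ x in Set.Iic (0 : ℝ),
        (deriv w x ^ 2 + (f2 H x ^ 2 / 4 + deriv (f2 H) x / 2) * w x ^ 2) < 0 := by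
  obtain ⟨hHs0, hHsStar, hHRStar, hH3R⟩ := hydShock_arith F HR hF0 h0 h1 hdom
  have hsm' : ContDiff ℝ (⊤ : ℕ∞) H := hsm.of_le (by simp)
  set g : ℝ → ℝ := profileRHS F HR with hgdef
  -- bounds on the range of H
  have hle1 : ∀ x ≤ (0:ℝ), H x ≤ 1 := by
    intro x hx
    refine ge_of_tendsto hlimL ?_
    filter_upwards [eventually_le_atBot (x - 1)] with y hy
    exact (hmono (by linarith : y ≤ (0:ℝ)) hx (by linarith)).le
  have hlt1 : ∀ x ≤ (0:ℝ), H x < 1 :=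
    fun x hx => lt_of_lt_of_le (hmono (by linarith : x - 1 ≤ (0:ℝ)) hx (by linarith))
      (hle1 (x-1) (by linarith))
  have hgeStar : ∀ x ≤ (0:ℝ), Hstar F HR ≤ H x := by
    intro x hx
    rcases eq_or_lt_of_le hx with rfl | hx'
    · exact hH0.ge
    · rw [← hH0]; exact (hmono hx Set.self_mem_Iic hx').le
  have hStar1 : Hstar F HR < 1 := hH0 ▸ hlt1 0 le_rfl
  -- sign of g on the range of H
  have hgneg : ∀ h : ℝ, Hstar F HR ≤ h → h < 1 → g h < 0 := by
    intro h hh1 hh2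
    have hs : Hs F HR < h := lt_of_lt_of_le hHsStar hh1
    have hden : 0 < (h - Hs F HR) * (h ^ 2 + h * Hs F HR + Hs F HR ^ 2) := by
      have h0' : 0 < h := lt_trans hHs0 hs
      apply mul_pos (by linarith)
      positivity
    have hnum : F ^ 2 * (h - 1) * (h - HR) * (h - H3 HR) < 0 := by
      have e : F ^ 2 * (h - 1) * (h - HR) * (h - H3 HR)
          = (F ^ 2 * ((h - HR) * (h - H3 HR))) * (h - 1) := by ring
      rw [e]
      apply mul_neg_of_pos_of_neg
      · apply mul_pos (pow_pos hF0 2)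
        apply mul_pos (by linarith) (by linarith)
      · linarith
    exact div_neg_of_neg_of_pos hnum hden
  have hgnegx : ∀ x ≤ (0:ℝ), g (H x) < 0 :=
    fun x hx => hgneg (H x) (hgeStar x hx) (hlt1 x hx)
  have hH'neg : ∀ x ≤ (0:ℝ), deriv H x < 0 := fun x hx => by
    rw [hode x hx]; exact hgnegx x hx
  -- smoothness of g on U := Ioi Hs
  have hUopen : IsOpen (Ioi (Hs F HR)) := isOpen_Ioi
  have hgC : ContDiffOn ℝ (⊤ : ℕ∞) g (Ioi (Hs F HR)) := by
    apply ContDiffOn.div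
    · exact (((contDiff_const.mul ((contDiff_id).sub contDiff_const)).mul
        ((contDiff_id).sub contDiff_const)).mul
        ((contDiff_id).sub contDiff_const)).contDiffOn
    · exact (((contDiff_id).sub contDiff_const).mul
        (((contDiff_id.pow 2).add
          ((contDiff_id).mul contDiff_const)).add contDiff_const)).contDiffOn
    · intro h hh
      have hs : Hs F HR < h := hh
      have h0' : 0 < h := lt_trans hHs0 hs
      have : 0 < (h - Hs F HR) * (h ^ 2 + h * Hs F HR + Hs F HR ^ 2) := by
        apply mul_pos (by linarith); positivity
      exact ne_of_gt this
  have hHU : ∀ x ≤ (0:ℝ), H x ∈ Ioi (Hs F HR) :=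
    fun x hx => lt_of_lt_of_le hHsStar (hgeStar x hx)
  have hgdiff : ∀ x ≤ (0:ℝ), DifferentiableAt ℝ g (H x) := by
    intro x hx
    exact (hgC.differentiableOn (by norm_num)).differentiableAt (hUopen.mem_nhds (hHU x hx))
  -- identification of the second derivative
  have hHdiff : Differentiable ℝ H := hsm'.differentiable (by simp)
  have hdHsm : ContDiff ℝ (⊤ : ℕ∞) (deriv H) := (contDiff_infty_iff_deriv.mp hsm').2
  have hdHdiff : Differentiable ℝ (deriv H) := hdHsm.differentiable (by simp)
  have hH'' : ∀ x ≤ (0:ℝ), deriv (deriv H) x = deriv g (H x) * deriv H x := by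
    intro x hx
    have hud : UniqueDiffWithinAt ℝ (Iic (0:ℝ)) x := uniqueDiffOn_Iic 0 x hx
    have hcomp : HasDerivAt (g ∘ H) (deriv g (H x) * deriv H x) x :=
      ((hgdiff x hx).hasDerivAt).comp x (hHdiff x).hasDerivAt
    calc deriv (deriv H) x = derivWithin (deriv H) (Iic 0) x :=
          ((hdHdiff x).derivWithin hud).symm
      _ = derivWithin (g ∘ H) (Iic 0) x :=
          derivWithin_congr (fun y hy => hode y hy) (hode x hx)
      _ = deriv g (H x) * deriv H x := hcomp.hasDerivWithinAt.derivWithin hud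
  have hf2eq : ∀ x ≤ (0:ℝ), f2 H x = -deriv g (H x) := by
    intro x hx
    rw [f2, hH'' x hx]
    field_simp [(hH'neg x hx).ne]
  -- bound on f2 on Iic 0
  obtain ⟨C, hCb⟩ : ∃ C, ∀ x ≤ (0:ℝ), |f2 H x| ≤ C := by
    have hcomp : IsCompact (Icc (Hstar F HR) 1) := isCompact_Icc
    have hsub : Icc (Hstar F HR) 1 ⊆ Ioi (Hs F HR) :=
      fun h hh => lt_of_lt_of_le hHsStar hh.1
    have hcont : ContinuousOn (deriv g) (Icc (Hstar F HR) 1) :=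
      (hgC.continuousOn_deriv_of_isOpen hUopen (by exact_mod_cast le_top)).mono hsub
    obtain ⟨C, hC⟩ := hcomp.exists_bound_of_continuousOn hcont
    refine ⟨C, fun x hx => ?_⟩
    rw [hf2eq x hx, abs_neg]
    exact hC (H x) ⟨hgeStar x hx, hle1 x hx⟩
  have hC0 : 0 ≤ C := le_trans (abs_nonneg _) (hCb 0 le_rfl)
  -- continuity and differentiability of f2 near Iic 0
  have hddHsm : ContDiff ℝ (⊤ : ℕ∞) (deriv (deriv H)) := (contDiff_infty_iff_deriv.mp hdHsm).2
  have hddHdiff : Differentiable ℝ (deriv (deriv H)) := hddHsm.differentiable (by simp)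
  have hf2def : f2 H = fun x => -(deriv (deriv H) x) / deriv H x := rfl
  have hf2diff : ∀ x ≤ (0:ℝ), DifferentiableAt ℝ (f2 H) x := by
    intro x hx
    rw [hf2def]
    exact DifferentiableAt.div ((hddHdiff x).neg) (hdHdiff x) (hH'neg x hx).ne
  -- facts about w
  have hwd : ∀ x, HasDerivAt w (deriv w x) x := fun x => ((hw.differentiable one_ne_zero) x).hasDerivAt
  have hwc : Continuous w := hw.continuous
  have hw'c : Continuous (deriv w) := hw.continuous_deriv le_rfl
  -- measurability
  have hf2m : Measurable (f2 H) := by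
    rw [hf2def]
    exact (hddHsm.continuous.neg.measurable).div hdHsm.continuous.measurable
  have hf2'm : Measurable (deriv (f2 H)) := measurable_deriv _
  -- integrable pieces
  have i_a : IntegrableOn (fun x => f2 H x * w x * deriv w x) (Set.Iic 0) := by
    apply Integrable.mono' ((hw2.add hw'2).const_mul (C/2))
      (((hf2m.mul hwc.measurable).mul hw'c.measurable).aestronglyMeasurable)
    filter_upwards [ae_restrict_mem measurableSet_Iic] with x hx
    have h1 : |f2 H x| ≤ C := hCb x hx
    rw [Real.norm_eq_abs]
    calc |f2 H x * w x * deriv w x| = |f2 H x| * (|w x| * |deriv w x|) := by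
          rw [abs_mul, abs_mul, mul_assoc]
      _ ≤ C * ((w x ^ 2 + deriv w x ^ 2)/2) := by
          apply mul_le_mul h1 ?_ (by positivity) (le_trans (abs_nonneg _) h1)
          nlinarith [sq_abs (w x), sq_abs (deriv w x), sq_nonneg (|w x| - |deriv w x|)]
      _ = C/2 * (w x ^ 2 + deriv w x ^ 2) := by ring
  have i_b : IntegrableOn (fun x => f2 H x ^ 2 * w x ^ 2 / 4) (Set.Iic 0) := by
    apply Integrable.mono' (hw2.const_mul (C^2/4))
      ((((hf2m.pow_const 2).mul (hwc.measurable.pow_const 2)).div_const 4).aestronglyMeasurable)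
    filter_upwards [ae_restrict_mem measurableSet_Iic] with x hx
    have h1 : |f2 H x| ≤ C := hCb x hx
    have h2 : f2 H x ^ 2 ≤ C ^ 2 := by nlinarith [sq_abs (f2 H x), abs_nonneg (f2 H x)]
    show ‖f2 H x ^ 2 * w x ^ 2 / 4‖ ≤ C ^ 2 / 4 * w x ^ 2
    rw [Real.norm_eq_abs, abs_of_nonneg (by positivity)]
    nlinarith [sq_nonneg (w x)]
  set v : ℝ → ℝ := fun x => deriv w x - f2 H x * w x / 2 with hv
  have hv2int : IntegrableOn (fun x => v x ^ 2) (Set.Iic 0) := by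
    have h' : IntegrableOn (fun x => deriv w x ^ 2 - f2 H x * w x * deriv w x
        + f2 H x ^ 2 * w x ^ 2 / 4) (Set.Iic 0) := (hw'2.sub i_a).add i_b
    exact h'.congr_fun (fun x _ => by simp only [hv]; ring) measurableSet_Iic
  set G' : ℝ → ℝ := fun x => deriv (f2 H) x * w x ^ 2 / 2 + f2 H x * (w x * deriv w x) with hG'
  have hG'int : IntegrableOn G' (Set.Iic 0) := by
    have h' : IntegrableOn (fun x => ((f2 H x ^ 2/4 + deriv (f2 H) x / 2) * w x ^ 2
        - f2 H x ^ 2 * w x ^ 2/4) + f2 H x * w x * deriv w x) (Set.Iic 0) := (hpot.sub i_b).add i_a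
    exact h'.congr_fun (fun x _ => by simp only [hG']; ring) measurableSet_Iic
  -- limit of w^2 at -infinity
  have hu'int : IntegrableOn (fun x => 2 * w x * deriv w x) (Set.Iic 0) := by
    apply Integrable.mono' (hw2.add hw'2)
      ((((hwc.measurable.const_mul 2).mul hw'c.measurable)).aestronglyMeasurable)
    filter_upwards [ae_restrict_mem measurableSet_Iic] with x hx
    rw [Real.norm_eq_abs]
    calc |2 * w x * deriv w x| = 2 * (|w x| * |deriv w x|) := by
          rw [abs_mul, abs_mul, mul_assoc]; norm_num
      _ ≤ w x ^ 2 + deriv w x ^ 2 := by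
          nlinarith [sq_abs (w x), sq_abs (deriv w x), sq_nonneg (|w x| - |deriv w x|)]
  have huderiv : ∀ t : ℝ, HasDerivAt (fun y => w y ^ 2) (2 * w t * deriv w t) t := by
    intro t
    have h' := (hwd t).fun_pow 2
    simpa [mul_comm, mul_assoc, mul_left_comm] using h'
  have hIlim : Tendsto (fun x : ℝ => ∫ t in x..0, 2 * w t * deriv w t) atBot
      (𝓝 (∫ t in Set.Iic (0:ℝ), 2 * w t * deriv w t)) :=
    intervalIntegral_tendsto_integral_Iic 0 hu'int tendsto_id
  have hween : ∀ x : ℝ, w x ^ 2 = w 0 ^ 2 - ∫ t in x..0, 2 * w t * deriv w t := by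
    intro x
    have h' : ∫ t in x..0, 2 * w t * deriv w t = w 0 ^ 2 - w x ^ 2 :=
      intervalIntegral.integral_eq_sub_of_hasDerivAt (fun t _ => huderiv t)
        (((continuous_const.mul hwc).mul hw'c).intervalIntegrable x 0)
    rw [h']; ring
  have hulim : Tendsto (fun x => w x ^ 2) atBot
      (𝓝 (w 0 ^ 2 - ∫ t in Set.Iic (0:ℝ), 2 * w t * deriv w t)) :=
    (tendsto_const_nhds.sub hIlim).congr (fun x => (hween x).symm)
  have hL0 : w 0 ^ 2 - (∫ t in Set.Iic (0:ℝ), 2 * w t * deriv w t) = 0 := by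
    set L := w 0 ^ 2 - ∫ t in Set.Iic (0:ℝ), 2 * w t * deriv w t with hLd
    have hLnn : 0 ≤ L := ge_of_tendsto hulim (Eventually.of_forall (fun x => sq_nonneg (w x)))
    rcases eq_or_lt_of_le hLnn with h' | h'
    · exact h'.symm
    · exfalso
      have hev : ∀ᶠ x in atBot, L/2 < w x ^ 2 := (tendsto_order.1 hulim).1 (L/2) (by linarith)
      obtain ⟨x₀, hx₀⟩ := eventually_atBot.1 hev
      have hIic : IntegrableOn (fun x => w x ^ 2) (Set.Iic (min x₀ 0)) :=
        hw2.mono_set (Set.Iic_subset_Iic.2 (min_le_right _ _))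
      have hconst : IntegrableOn (fun _ => L/2) (Set.Iic (min x₀ 0)) := by
        apply Integrable.mono' hIic aestronglyMeasurable_const
        filter_upwards [ae_restrict_mem measurableSet_Iic] with x hx
        rw [Real.norm_eq_abs, abs_of_pos (by linarith)]
        exact (hx₀ x (le_trans hx (min_le_left _ _))).le
      rw [integrableOn_const_iff] at hconst
      rcases hconst with h'' | h''
      · simp at h''; linarith
      · rw [Real.volume_Iic] at h''; exact (lt_irrefl _ h'')
  have hulim0 : Tendsto (fun x => w x ^ 2) atBot (𝓝 0) := hL0 ▸ hulim
  -- G and its limit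
  set G : ℝ → ℝ := fun x => f2 H x * w x ^ 2 / 2 with hG
  have hGlim : Tendsto G atBot (𝓝 0) := by
    have h2 : Tendsto (fun x => C/2 * w x ^ 2) atBot (𝓝 0) := by
      simpa using hulim0.const_mul (C/2)
    apply squeeze_zero_norm' ?_ h2
    filter_upwards [eventually_le_atBot (0:ℝ)] with x hx
    have h1 : |f2 H x| ≤ C := hCb x hx
    simp only [hG]
    rw [Real.norm_eq_abs, abs_div, abs_mul, abs_of_nonneg (sq_nonneg (w x))]
    rw [abs_of_nonneg (by norm_num : (0:ℝ) ≤ 2)]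
    rw [div_le_iff₀ (by norm_num : (0:ℝ) < 2)]
    nlinarith [sq_nonneg (w x)]
  -- FTC on Iic 0
  have hGderiv : ∀ x ∈ Set.Iio (0:ℝ), HasDerivAt G (G' x) x := by
    intro x hx
    have hf2d : HasDerivAt (f2 H) (deriv (f2 H) x) x := (hf2diff x hx.le).hasDerivAt
    have hstep := (hf2d.mul (huderiv x)).div_const 2
    have e : G' x = (deriv (f2 H) x * w x ^ 2 + f2 H x * (2 * w x * deriv w x)) / 2 := by
      show deriv (f2 H) x * w x ^ 2 / 2 + f2 H x * (w x * deriv w x) = _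
      ring
    rw [e]; exact hstep
  have hGcont : ContinuousWithinAt G (Set.Iic 0) 0 := by
    have hf2c : ContinuousAt (f2 H) 0 := (hf2diff 0 le_rfl).continuousAt
    exact ((hf2c.mul ((hwc.continuousAt).pow 2)).div_const 2).continuousWithinAt
  have hFTC : ∫ x in Set.Iic (0:ℝ), G' x = f2 H 0 * w 0 ^ 2 / 2 := by
    have h' := integral_Iic_of_hasDerivAt_of_tendsto hGcont hGderiv hG'int hGlim
    simpa using h'
  -- main identity
  have hsplit : (∫ x in Set.Iic (0:ℝ),
        (deriv w x ^ 2 + (f2 H x ^ 2 / 4 + deriv (f2 H) x / 2) * w x ^ 2))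
      = (∫ x in Set.Iic (0:ℝ), v x ^ 2) + (∫ x in Set.Iic (0:ℝ), G' x) := by
    rw [← integral_add hv2int hG'int]
    apply setIntegral_congr_fun measurableSet_Iic
    intro x _
    simp only [hv, hG']
    ring
  rw [hsplit, hFTC]
  have hv2nn : 0 ≤ ∫ x in Set.Iic (0:ℝ), v x ^ 2 :=
    setIntegral_nonneg measurableSet_Iic (fun x _ => sq_nonneg _)
  by_cases hw0 : w 0 = 0
  · have hvpos : 0 < ∫ x in Set.Iic (0:ℝ), v x ^ 2 := by
      obtain ⟨x₁, hx₁, hwx₁⟩ := hwne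
      have hex : ∃ x₀ ≤ (0:ℝ), v x₀ ≠ 0 := by
        by_contra hno
        push_neg at hno
        apply hwx₁
        set φ : ℝ → ℝ := fun t => w (-t) with hφ
        have hφd : ∀ t, HasDerivAt φ (-deriv w (-t)) t := by
          intro t
          have h1 : HasDerivAt (fun s : ℝ => -s) (-1) t := (hasDerivAt_id t).neg
          have h2 := (hwd (-t)).comp t h1
          simpa [hφ, Function.comp_def] using h2
        have key := norm_le_gronwallBound_of_norm_deriv_right_le (f := φ)
          (f' := fun t => -deriv w (-t)) (δ := 0) (K := C/2) (ε := 0) (a := 0) (b := -x₁)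
          (fun t _ => ((hφd t).continuousAt).continuousWithinAt)
          (fun t _ => (hφd t).hasDerivWithinAt)
          (by simp [hφ, hw0])
          ?_
        · have h3 := key (-x₁) ⟨by linarith, le_rfl⟩
          rw [gronwallBound_ε0_δ0] at h3
          have h4 : ‖w x₁‖ ≤ 0 := by simpa [hφ] using h3
          simpa using norm_le_zero_iff.mp h4
        · intro t ht
          have hmt : -t ≤ (0:ℝ) := by linarith [ht.1]
          have hveq := hno (-t) hmt
          simp only [hv] at hveq
          have h5 : deriv w (-t) = f2 H (-t) * w (-t) / 2 := by linarith [hveq]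
          rw [Real.norm_eq_abs, Real.norm_eq_abs, abs_neg, h5]
          have h1 : |f2 H (-t)| ≤ C := hCb (-t) hmt
          rw [abs_div, abs_mul, abs_of_nonneg (by norm_num : (0:ℝ) ≤ 2)]
          have habs : 0 ≤ |w (-t)| := abs_nonneg _
          rw [div_le_iff₀ (by norm_num : (0:ℝ) < 2)]
          have hC0' : 0 ≤ C := hC0
          nlinarith
      obtain ⟨x₀, hx₀le, hvx₀⟩ := hex
      rw [setIntegral_pos_iff_support_of_nonneg_ae
        (Eventually.of_forall (fun x => sq_nonneg _)) hv2int]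
      have hvc : ContinuousAt v x₀ := by
        have hf2c : ContinuousAt (f2 H) x₀ := (hf2diff x₀ hx₀le).continuousAt
        exact (hw'c.continuousAt).sub ((hf2c.mul hwc.continuousAt).div_const 2)
      have hne : ∀ᶠ y in 𝓝 x₀, v y ≠ 0 := hvc.eventually_ne hvx₀
      obtain ⟨δ, hδ0, hδ⟩ := Metric.eventually_nhds_iff.mp hne
      have hsub : Set.Ioo (x₀ - δ) x₀ ⊆ (Function.support fun x => v x ^ 2) ∩ Set.Iic 0 := by
        intro y hy
        refine ⟨?_, le_trans hy.2.le hx₀le⟩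
        have hdist : dist y x₀ < δ := by
          rw [Real.dist_eq, abs_lt]
          constructor <;> [linarith [hy.1]; linarith [hy.2]]
        have hvy : v y ≠ 0 := hδ hdist
        simp only [Function.mem_support]
        exact pow_ne_zero 2 hvy
      calc (0:ENNReal) < volume (Set.Ioo (x₀ - δ) x₀) := by
            rw [Real.volume_Ioo]
            simp only [ENNReal.ofReal_pos]
            linarith
        _ ≤ volume ((Function.support fun x => v x ^ 2) ∩ Set.Iic 0) := measure_mono hsub
    rw [hw0]
    ring_nf
    nlinarith [hvpos]
  · have hw0sq : 0 < w 0 ^ 2 := by positivity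
    nlinarith [hv2nn, mul_lt_mul_of_pos_right hc1 hw0sq]
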